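/- Let p(z) = ∑_{k=0}^N a_k z^k be a complex polynomial of degree N with leading coefficient a_N ≠ 0 and simple roots z_1,…,z_N ∈ ℂ, and let ẑ_i be the stereographic projections of z_i onto the Riemann sphere. Then V(ẑ_1,…,ẑ_N) = (N−1)∑_{i=1}^N log√(1+|z_i|²) − (1/2)∑_{i=1}^N log|p'(z_i)| + (N/2)·log|a_N|, where V is the logarithmic energy. -/

import Mathlib

/-! The chordal distance formula splits each term of the energy as
`log ‖ẑᵢ - ẑⱼ‖ = log ‖zᵢ - zⱼ‖ - log √(1 + ‖zᵢ‖²) - log √(1 + ‖zⱼ‖²)`, and every index lies in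
`N - 1` pairs. The remaining sum of `log ‖zᵢ - zⱼ‖` over ordered pairs `i ≠ j` is
`∑ᵢ log ‖p'(zᵢ) / a‖`, because `p'(zᵢ) = a ∏_{j ≠ i} (zᵢ - zⱼ)` at a simple root. -/

open Finset Polynomial

/-- Stereographic projection of `z ∈ ℂ` onto the Riemann sphere
(the sphere of radius 1/2 centered at (0,0,1/2)). -/
noncomputable def riemannProj (z : ℂ) : EuclideanSpace ℝ (Fin 3) :=
  WithLp.toLp 2 ![z.re / (1 + ‖z‖ ^ 2), z.im / (1 + ‖z‖ ^ 2),
    ‖z‖ ^ 2 / (1 + ‖z‖ ^ 2)]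

noncomputable def logEnergy {N : ℕ} (x : Fin N → EuclideanSpace ℝ (Fin 3)) : ℝ :=
  -∑ p ∈ Finset.univ.filter (fun p : Fin N × Fin N => p.1 < p.2),
      Real.log ‖x p.1 - x p.2‖

theorem sq_norm_riemannProj_sub (z w : ℂ) :
    ‖riemannProj z - riemannProj w‖ ^ 2 =
      ‖z - w‖ ^ 2 / ((1 + ‖z‖ ^ 2) * (1 + ‖w‖ ^ 2)) := by
  simp only [EuclideanSpace.norm_sq_eq, Fin.sum_univ_three, riemannProj, PiLp.sub_apply,
    Real.norm_eq_abs, sq_abs, Complex.sq_norm, Complex.normSq_apply, Complex.sub_re, Complex.sub_im,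
    Matrix.cons_val_zero, Matrix.cons_val_one, Matrix.cons_val]
  field_simp
  ring

theorem norm_riemannProj_sub (z w : ℂ) :
    ‖riemannProj z - riemannProj w‖ =
      ‖z - w‖ / (√(1 + ‖z‖ ^ 2) * √(1 + ‖w‖ ^ 2)) := by
  rw [← Real.sqrt_sq (norm_nonneg (riemannProj z - riemannProj w)), sq_norm_riemannProj_sub,
    Real.sqrt_div' _ (by positivity), Real.sqrt_sq (norm_nonneg _), Real.sqrt_mul (by positivity)]

theorem log_norm_riemannProj_sub {z w : ℂ} (h : z ≠ w) :
    Real.log ‖riemannProj z - riemannProj w‖ =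
      Real.log ‖z - w‖ - Real.log √(1 + ‖z‖ ^ 2) - Real.log √(1 + ‖w‖ ^ 2) := by
  rw [norm_riemannProj_sub, Real.log_div (by simpa [sub_eq_zero]) (by positivity),
    Real.log_mul (by positivity) (by positivity), sub_sub]

section PairSums

variable {ι M : Type*} [Fintype ι] [AddCommMonoid M]

theorem sum_offDiag_eq_sum_sum_erase [DecidableEq ι] (g : ι → ι → M) :
    ∑ q ∈ (univ : Finset ι).offDiag, g q.1 q.2 = ∑ i, ∑ j ∈ univ.erase i, g i j := by
  have hoff : (univ : Finset ι).offDiag = (univ ×ˢ univ).filter (fun q => q.1 ≠ q.2) := by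
    ext; simp
  rw [hoff, sum_filter, sum_product]
  refine sum_congr rfl fun i _ => ?_
  rw [← filter_ne, sum_filter]

theorem sum_offDiag_snd {G : Type*} [AddCommGroup G] [DecidableEq ι] (f : ι → G) :
    ∑ q ∈ (univ : Finset ι).offDiag, f q.2 = ((Fintype.card ι : ℤ) - 1) • ∑ i, f i := by
  rw [sum_offDiag_eq_sum_sum_erase (fun _ j => f j), sub_smul, one_smul, natCast_zsmul]
  simp only [sum_erase_eq_sub (mem_univ _), sum_sub_distrib, sum_const, card_univ]

theorem sum_offDiag_eq_sum_filter_lt [LinearOrder ι] (g : ι → ι → M) :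
    ∑ q ∈ (univ : Finset ι).offDiag, g q.1 q.2 =
      ∑ q ∈ univ.filter (fun q : ι × ι => q.1 < q.2), (g q.1 q.2 + g q.2 q.1) := by
  rw [sum_add_distrib, ← sum_filter_add_sum_filter_not _ (fun q : ι × ι => q.1 < q.2)]
  congr 1
  · exact sum_congr (by ext q; simpa using ne_of_lt) fun _ _ => rfl
  · refine sum_nbij' Prod.swap Prod.swap ?_ ?_ (fun _ _ => rfl) (fun _ _ => rfl) (fun _ _ => rfl)
    all_goals
      intro q
      simp only [mem_filter, mem_offDiag, mem_univ, Prod.fst_swap, Prod.snd_swap]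
      grind

end PairSums

theorem logEnergy_riemannProj {N : ℕ} {z : Fin N → ℂ} (hz : Function.Injective z) :
    logEnergy (fun i => riemannProj (z i)) =
      (N - 1) * ∑ i, Real.log √(1 + ‖z i‖ ^ 2)
        - 1 / 2 * ∑ q ∈ univ.offDiag, Real.log ‖z q.1 - z q.2‖ := by
  set ρ : Fin N → ℝ := fun i => Real.log √(1 + ‖z i‖ ^ 2)
  have hterm : ∀ q ∈ univ.filter (fun q : Fin N × Fin N => q.1 < q.2),
      Real.log ‖riemannProj (z q.1) - riemannProj (z q.2)‖ =
        Real.log ‖z q.1 - z q.2‖ - ρ q.1 - ρ q.2 :=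
    fun q hq => log_norm_riemannProj_sub (hz.ne (mem_filter.1 hq).2.ne)
  have hρ := sum_offDiag_eq_sum_filter_lt (fun (_ : Fin N) j => ρ j)
  -- the pair term is symmetric, so its sum over `i < j` is half the `offDiag` sum
  have hL := sum_offDiag_eq_sum_filter_lt (fun i j => Real.log ‖z i - z j‖)
  rw [sum_offDiag_snd, Fintype.card_fin, zsmul_eq_mul] at hρ
  simp only [norm_sub_rev (z _) (z _), sum_add_distrib] at hL
  rw [logEnergy, sum_congr rfl hterm]
  simp only [sum_sub_distrib, sum_add_distrib] at hρ ⊢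
  push_cast at hρ
  linear_combination hL / 2 - hρ

theorem log_norm_derivative_eval_root {𝕜 ι : Type*} [NormedField 𝕜] [Fintype ι] [DecidableEq ι]
    {a : 𝕜} (ha : a ≠ 0) {z : ι → 𝕜} (hz : Function.Injective z) (i : ι) :
    Real.log ‖(derivative (C a * ∏ j, (X - C (z j)))).eval (z i)‖ =
      Real.log ‖a‖ + ∑ j ∈ univ.erase i, Real.log ‖z i - z j‖ := by
  have hnodal := Lagrange.eval_nodal_derivative_eval_node_eq (s := univ) (v := z) (mem_univ i)
  rw [Lagrange.eval_nodal, Lagrange.nodal_eq] at hnodal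
  have hne : ∀ j ∈ univ.erase i, ‖z i - z j‖ ≠ 0 := fun j hj =>
    norm_ne_zero_iff.2 (sub_ne_zero.2 (hz.ne (ne_of_mem_erase hj).symm))
  rw [derivative_C_mul, eval_mul, eval_C, hnodal, norm_mul, norm_prod,
    Real.log_mul (norm_ne_zero_iff.2 ha) (prod_ne_zero_iff.2 hne), Real.log_prod hne]

theorem sum_log_norm_derivative_eval_roots {𝕜 ι : Type*} [NormedField 𝕜] [Fintype ι]
    [DecidableEq ι] {a : 𝕜} (ha : a ≠ 0) {z : ι → 𝕜} (hz : Function.Injective z) :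
    ∑ i, Real.log ‖(derivative (C a * ∏ j, (X - C (z j)))).eval (z i)‖ =
      Fintype.card ι * Real.log ‖a‖ + ∑ q ∈ univ.offDiag, Real.log ‖z q.1 - z q.2‖ := by
  simp only [log_norm_derivative_eval_root ha hz, sum_add_distrib, sum_const, card_univ,
    nsmul_eq_mul, sum_offDiag_eq_sum_sum_erase (fun i j => Real.log ‖z i - z j‖)]

/-- For a degree-`N` polynomial `p` with leading coefficient `a ≠ 0` and
distinct (hence simple) roots `z 1, …, z N`, the logarithmic energy of the
stereographic projections of the roots onto the Riemann sphere decomposes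
in terms of `|p'(z i)|` and `|a|`. -/
theorem logEnergy_roots_formula (N : ℕ) (a : ℂ) (ha : a ≠ 0)
    (z : Fin N → ℂ) (hz : Function.Injective z)
    (p : Polynomial ℂ) (hp : p = C a * ∏ i : Fin N, (X - C (z i))) :
    logEnergy (fun i => riemannProj (z i))
      = (N - 1) * ∑ i : Fin N, Real.log (Real.sqrt (1 + ‖z i‖ ^ 2))
        - 1 / 2 * ∑ i : Fin N, Real.log ‖(Polynomial.derivative p).eval (z i)‖
        + N / 2 * Real.log ‖a‖ := by
  rw [logEnergy_riemannProj hz, hp, sum_log_norm_derivative_eval_roots ha hz, Fintype.card_fin]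
  ring
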